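/- arXiv:1609.09034 — 3 statements merged into one kernel-verified Lean document; each statement's English description precedes it below -/
import Mathlib

section
/- Let R be a weakly Laskerian commutative ring of finite Krull dimension and I a proper ideal of R. Then every prime ideal of R minimal over I is an associated prime of I in the Zariski-Samuel sense, i.e. Min I ⊆ ZS(I). -/
/-!
Suppose a minimal prime `p` of `I` is not of the form `√(I : x)`. Then for every `x ∉ p` some
prime `q ⊇ (I : x)` misses an element `z` with `z * w ∈ I` for some `w ∉ p`, the latter by
minimality of `p`. Iterating `x ↦ w * x` produces primes `Q k` and elements `Z k ∉ Q k` with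
`Z k ∈ Q l` for all `l > k`. By the infinite Erdős–Szekeres theorem, finite Krull dimension
leaves a subsequence without strict inclusions `Q k < Q l` for `k < l`, and along it there are
elements `y i` lying in every `Q j` except `Q i`. Then each `Q i` is an associated prime of
`R ⧸ ∑ᵢ yᵢ Qᵢ`, contradicting weak Laskerianity.
-/

def IsWeaklyLaskerian (R : Type*) [CommRing R] (M : Type*) [AddCommGroup M]
    [Module R M] : Prop :=
  ∀ N : Submodule R M, (associatedPrimes R (M ⧸ N)).Finite

theorem Order.exists_subseq_forall_not_lt_of_krullDim_lt_top {α : Type*} [Preorder α]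
    (hα : Order.krullDim α < ⊤) (f : ℕ → α) :
    ∃ g : ℕ ↪o ℕ, ∀ m n, m < n → ¬ f (g m) < f (g n) := by
  obtain ⟨g, hlt | hnlt⟩ := exists_increasing_or_nonincreasing_subseq (· < ·) f
  · have hmono : StrictMono (f ∘ g) :=
      strictMono_nat_of_lt_succ fun n ↦ hlt n (n + 1) n.lt_succ_self
    have := Order.krullDim_le_of_strictMono _ hmono
    rw [Order.krullDim_nat, top_le_iff] at this
    exact absurd this hα.ne
  · exact ⟨g, hnlt⟩

namespace Ideal

variable {R : Type*} [CommSemiring R]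

theorem exists_isPrime_le_not_le_of_radical_ne {J p : Ideal R} [p.IsPrime] (hJp : J ≤ p)
    (hne : J.radical ≠ p) : ∃ q : Ideal R, q.IsPrime ∧ J ≤ q ∧ ¬ p ≤ q := by
  by_contra! h
  refine hne (le_antisymm ((IsPrime.radical_le_iff ‹_›).mpr hJp) ?_)
  rw [radical_eq_sInf]
  exact le_sInf fun q ⟨hJq, hq⟩ ↦ h q hq hJq

theorem exists_pow_mul_mem_of_mem_minimalPrimes {I p : Ideal R} (hp : p ∈ I.minimalPrimes)
    {z : R} (hz : z ∈ p) : ∃ n : ℕ, ∃ w ∉ p, z ^ n * w ∈ I := by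
  have := hp.isPrime
  have hzI : algebraMap R (Localization.AtPrime p) z ∈ (I.map (algebraMap R _)).radical := by
    rw [IsLocalization.AtPrime.radical_map_of_mem_minimalPrimes _ p I hp]
    exact mem_map_of_mem _ hz
  obtain ⟨n, hn⟩ := hzI
  rw [← map_pow, IsLocalization.mem_map_algebraMap_iff p.primeCompl] at hn
  obtain ⟨⟨a, s⟩, hs⟩ := hn
  rw [← map_mul, IsLocalization.eq_iff_exists p.primeCompl] at hs
  obtain ⟨c, hc⟩ := hs
  have hcs : z ^ n * (c * s : R) = c * a := by rw [← hc]; ring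
  exact ⟨n, c * s, (c * s).2, hcs ▸ I.mul_mem_left _ a.2⟩

theorem exists_colon_le_notMem_mul_mem_of_ne_radical_colon {I p : Ideal R}
    (hp : p ∈ I.minimalPrimes) {x : R} (hx : x ∉ p) (hne : p ≠ (I.colon (span {x})).radical) :
    ∃ q : PrimeSpectrum R, I.colon (span {x}) ≤ q.asIdeal ∧
      ∃ z ∉ q.asIdeal, ∃ w ∉ p, z * w ∈ I := by
  have hpp := hp.isPrime
  have hcolon : I.colon (span {x}) ≤ p := fun r hr ↦
    (hpp.mem_or_mem (hp.le (mem_colon_span_singleton.mp hr))).resolve_right hx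
  obtain ⟨q, hq, hcq, hpq⟩ := exists_isPrime_le_not_le_of_radical_ne hcolon hne.symm
  obtain ⟨z, hzp, hzq⟩ := SetLike.not_le_iff_exists.mp hpq
  obtain ⟨n, w, hw, hzw⟩ := exists_pow_mul_mem_of_mem_minimalPrimes hp hzp
  exact ⟨⟨q, hq⟩, hcq, z ^ n, fun h ↦ hzq (hq.mem_of_pow_mem n h), w, hw, hzw⟩

theorem exists_seq_notMem_mem_of_forall_colon_le {I : Ideal R} {S : Submonoid R}
    (h : ∀ x ∈ S, ∃ q : PrimeSpectrum R, I.colon (span {x}) ≤ q.asIdeal ∧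
      ∃ z ∉ q.asIdeal, ∃ w ∈ S, z * w ∈ I) :
    ∃ (Q : ℕ → PrimeSpectrum R) (Z : ℕ → R),
      ∀ k, Z k ∉ (Q k).asIdeal ∧ ∀ l, k < l → Z k ∈ (Q l).asIdeal := by
  choose q hq z hz w hw hzw using fun x : S ↦ h x x.2
  let next : S → S := fun x ↦ ⟨w x, hw x⟩ * x
  let X : ℕ → S := fun k ↦ next^[k] 1
  have hX : ∀ k, X (k + 1) = next (X k) := fun k ↦ Function.iterate_succ_apply' next k 1
  have hdvd : ∀ k l, k < l → w (X k) ∣ X l := by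
    intro k l hkl
    induction l, hkl using Nat.le_induction with
    | base => rw [hX]; exact dvd_mul_right _ _
    | succ l _ ih => rw [hX]; exact ih.mul_left _
  refine ⟨fun k ↦ q (X k), fun k ↦ z (X k),
    fun k ↦ ⟨hz (X k), fun l hkl ↦ hq (X l) ?_⟩⟩
  obtain ⟨c, hc⟩ := hdvd k l hkl
  rw [mem_colon_span_singleton, hc, ← mul_assoc]
  exact I.mul_mem_right _ (hzw (X k))

end Ideal

namespace PrimeSpectrum

section CommSemiring

variable {R : Type*} [CommSemiring R]

theorem exists_notMem_forall_ne_mem {Q : ℕ → PrimeSpectrum R} {Z : ℕ → R}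
    (hZ : ∀ k, Z k ∉ (Q k).asIdeal ∧ ∀ l, k < l → Z k ∈ (Q l).asIdeal)
    (hQ : ∀ k l, k < l → ¬ Q k < Q l) :
    ∃ y : ℕ → R, ∀ i, y i ∉ (Q i).asIdeal ∧ ∀ j ≠ i, y i ∈ (Q j).asIdeal := by
  have hsep : ∀ j i, j < i → ∃ s ∈ (Q j).asIdeal, s ∉ (Q i).asIdeal := by
    intro j i hji
    refine SetLike.not_le_iff_exists.mp fun hle ↦ hQ j i hji (lt_of_le_of_ne hle fun hQji ↦ ?_)
    exact (hZ j).1 (hQji ▸ (hZ j).2 i hji)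
  choose! s hsj hsi using hsep
  refine ⟨fun i ↦ Z i * ∏ j ∈ Finset.range i, s j i, fun i ↦ ⟨?_, fun j hji ↦ ?_⟩⟩
  · refine (Q i).isPrime.mul_notMem (hZ i).1 fun h ↦ ?_
    obtain ⟨j, hj, hji⟩ := ((Q i).isPrime.prod_mem_iff).mp h
    exact hsi j i (Finset.mem_range.mp hj) hji
  · rcases hji.lt_or_gt with hji | hij
    · exact Ideal.mul_mem_left _ _ <|
        Ideal.prod_mem _ (Finset.mem_range.mpr hji) (hsj j i hji)
    · exact Ideal.mul_mem_right _ _ ((hZ i).2 j hij)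

theorem iSup_span_mul_le {ι : Type*} {Q : ι → PrimeSpectrum R} {y : ι → R}
    (hy : ∀ i, ∀ j ≠ i, y i ∈ (Q j).asIdeal) (i : ι) :
    ⨆ j, Ideal.span {y j} * (Q j).asIdeal ≤ (Q i).asIdeal := by
  refine iSup_le fun j ↦ ?_
  by_cases hji : j = i
  · exact hji ▸ Ideal.mul_le_right
  · exact Ideal.mul_le_left.trans ((Ideal.span_singleton_le_iff_mem _).mpr (hy j i (Ne.symm hji)))

end CommSemiring

variable {R : Type*} [CommRing R] {ι : Type*} {Q : ι → PrimeSpectrum R} {y : ι → R}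

theorem mem_associatedPrimes_quotient_iSup_span_mul
    (hy : ∀ i, y i ∉ (Q i).asIdeal ∧ ∀ j ≠ i, y i ∈ (Q j).asIdeal) (i : ι) :
    (Q i).asIdeal ∈ associatedPrimes R (R ⧸ ⨆ j, Ideal.span {y j} * (Q j).asIdeal) := by
  refine ⟨(Q i).isPrime, Submodule.Quotient.mk (y i), ?_⟩
  suffices hcolon :
      (⊥ : Submodule R (R ⧸ _)).colon {Submodule.Quotient.mk (y i)} = (Q i).asIdeal by
    rw [hcolon, (Q i).isPrime.radical]
  ext r
  rw [Submodule.mem_colon_singleton, Submodule.mem_bot, ← Submodule.Quotient.mk_smul,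
    Submodule.Quotient.mk_eq_zero, smul_eq_mul]
  constructor
  · intro hr
    have hJ := iSup_span_mul_le (fun k ↦ (hy k).2) i hr
    exact ((Q i).isPrime.mem_or_mem hJ).resolve_right (hy i).1
  · intro hr
    rw [mul_comm]
    exact Ideal.mem_iSup_of_mem i (Ideal.mul_mem_mul (Ideal.mem_span_singleton_self _) hr)

theorem infinite_associatedPrimes_quotient_iSup_span_mul [Infinite ι]
    (hy : ∀ i, y i ∉ (Q i).asIdeal ∧ ∀ j ≠ i, y i ∈ (Q j).asIdeal) :
    (associatedPrimes R (R ⧸ ⨆ j, Ideal.span {y j} * (Q j).asIdeal)).Infinite := by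
  refine Set.infinite_of_injective_forall_mem (f := fun i ↦ (Q i).asIdeal) (fun i j hij ↦ ?_)
    (mem_associatedPrimes_quotient_iSup_span_mul hy)
  by_contra hne
  have hQij : (Q i).asIdeal = (Q j).asIdeal := hij
  exact (hy i).1 (hQij ▸ (hy i).2 j (Ne.symm hne))

end PrimeSpectrum

theorem minimalPrimes_subset_zariskiSamuel_of_weaklyLaskerian_finiteDim_general {R : Type*}
    [CommRing R] (hR : IsWeaklyLaskerian R R) (hdim : ringKrullDim R < ⊤)
    (I : Ideal R) (p : Ideal R) (hp : p ∈ I.minimalPrimes) :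
    ∃ x : R, p = (Submodule.colon I (Ideal.span {x})).radical := by
  by_contra! hZS
  have := hp.isPrime
  obtain ⟨Q, Z, hZ⟩ := Ideal.exists_seq_notMem_mem_of_forall_colon_le (S := p.primeCompl)
    fun x hx ↦ Ideal.exists_colon_le_notMem_mul_mem_of_ne_radical_colon hp hx (hZS x)
  obtain ⟨g, hg⟩ := Order.exists_subseq_forall_not_lt_of_krullDim_lt_top hdim Q
  obtain ⟨y, hy⟩ := PrimeSpectrum.exists_notMem_forall_ne_mem (Q := Q ∘ g) (Z := Z ∘ g)
    (fun k ↦ ⟨(hZ (g k)).1, fun l hkl ↦ (hZ (g k)).2 (g l) (g.strictMono hkl)⟩) hg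
  exact PrimeSpectrum.infinite_associatedPrimes_quotient_iSup_span_mul hy (hR _)

/-- If `R` is a weakly Laskerian commutative ring of finite Krull dimension and `I` is a
proper ideal of `R`, then every prime minimal over `I` is a Zariski–Samuel associated
prime of `I`, i.e. it equals the radical of `(I : x)` for some `x ∈ R`. -/
theorem minimalPrimes_subset_zariskiSamuel_of_weaklyLaskerian_finiteDim {R : Type*}
    [CommRing R] (hR : IsWeaklyLaskerian R R) (hdim : ringKrullDim R < ⊤)
    (I : Ideal R) (hI : I ≠ ⊤) (p : Ideal R) (hp : p ∈ I.minimalPrimes) :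
    ∃ x : R, p = (Submodule.colon I (Ideal.span {x})).radical :=
  minimalPrimes_subset_zariskiSamuel_of_weaklyLaskerian_finiteDim_general hR hdim I p hp
end

section
/- Let R be a weakly Laskerian commutative ring such that the polynomial ring R[X] is weakly Laskerian for some indeterminate X over R, and let I be a proper ideal of R. Then every prime ideal of R minimal over I is an associated prime of I in the Zariski-Samuel sense, i.e. Min I ⊆ ZS(I). -/
/-!
Let `p` be minimal over `I` and let `S = I R_p ∩ R`, whose radical is `p`. Finitely many elements
of `S` all lie in a single `(I : s)` with `s ∉ p`, and `rad (I : s) ⊆ p`; so if `p` is not of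
the form `rad (I : s)`, then `S` lies in the radical of no ideal generated by finitely many of
its elements. This yields `t₀, t₁, …` and primes `Q_k` containing `t_j` for `j < k` but not `t_k`.
The ideals `B_k = Q_k t_k + (t_j | j < k)` increase with `(B_k : t_k) = Q_k`, and modulo the ideal
`A ⊆ R[X]` of polynomials whose `k`-th coefficient lies in `B_k` the annihilator of `t_k X^k` is
`Q_k + X R[X]`. These are infinitely many associated primes of `R[X]/A`.
-/

open Polynomial

namespace Polynomial

variable {R : Type*} [CommRing R]

def coeffIdeal (B : ℕ →o Ideal R) : Ideal R[X] where
  carrier := {f | ∀ n, f.coeff n ∈ B n}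
  add_mem' hf hg n := by
    rw [coeff_add]
    exact add_mem (hf n) (hg n)
  zero_mem' n := by simp
  smul_mem' c f hf n := by
    rw [smul_eq_mul, coeff_mul]
    refine sum_mem fun x hx => Ideal.mul_mem_left _ _ (B.monotone ?_ (hf x.2))
    have := Finset.HasAntidiagonal.mem_antidiagonal.mp hx
    omega

theorem mem_coeffIdeal {B : ℕ →o Ideal R} {f : R[X]} :
    f ∈ coeffIdeal B ↔ ∀ n, f.coeff n ∈ B n :=
  Iff.rfl

theorem colon_coeffIdeal_C_mul_X_pow {B : ℕ →o Ideal R} {t : R} {k : ℕ}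
    (ht : t ∈ B (k + 1)) :
    (⊥ : Submodule R[X] (R[X] ⧸ coeffIdeal B)).colon {Submodule.Quotient.mk (C t * X ^ k)} =
      ((B k).colon (Ideal.span {t})).comap constantCoeff := by
  ext r
  have hcoeff (n : ℕ) :
      (r * (C t * X ^ k)).coeff n = if k ≤ n then r.coeff (n - k) * t else 0 := by
    rw [← mul_assoc, coeff_mul_X_pow', coeff_mul_C]
  rw [Submodule.mem_colon_singleton, ← Submodule.Quotient.mk_smul, Submodule.mem_bot,
    Submodule.Quotient.mk_eq_zero, smul_eq_mul, mem_coeffIdeal, Ideal.mem_comap,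
    Ideal.mem_colon_span_singleton, constantCoeff_apply]
  constructor
  · intro hr
    simpa [hcoeff] using hr k
  · intro hr n
    rw [hcoeff]
    split_ifs with hkn
    · obtain rfl | hlt := hkn.eq_or_lt
      · simpa using hr
      · exact Ideal.mul_mem_left _ _ (B.monotone hlt ht)
    · exact zero_mem _

theorem comap_constantCoeff_mem_associatedPrimes {B : ℕ →o Ideal R} {t : R} {k : ℕ}
    (ht : t ∈ B (k + 1)) (hprime : ((B k).colon (Ideal.span {t})).IsPrime) :
    ((B k).colon (Ideal.span {t})).comap constantCoeff ∈
      associatedPrimes R[X] (R[X] ⧸ coeffIdeal B) := by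
  have hP := hprime.comap (constantCoeff (R := R))
  refine ⟨hP, Submodule.Quotient.mk (C t * X ^ k), ?_⟩
  rw [colon_coeffIdeal_C_mul_X_pow ht, hP.radical]

end Polynomial

namespace Ideal

variable {R : Type*} [CommRing R]

open Set

theorem exists_isPrime_le_notMem_of_notMem_radical {I : Ideal R} {a : R}
    (ha : a ∉ I.radical) : ∃ Q : Ideal R, Q.IsPrime ∧ I ≤ Q ∧ a ∉ Q := by
  by_contra! h
  rw [radical_eq_sInf] at ha
  exact ha (Submodule.mem_sInf.mpr fun Q hQ => h Q hQ.2 hQ.1)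

theorem exists_seq_notMem_radical_span {S : Set R}
    (hS : ∀ F : Finset R, ↑F ⊆ S → ¬ S ⊆ (span (F : Set R)).radical) :
    ∃ t : ℕ → R, ∀ k, t k ∉ (span (t '' Iio k)).radical := by
  classical
  have hnext (F : {F : Finset R // ↑F ⊆ S}) : ∃ a ∈ S, a ∉ (span (F : Set R)).radical :=
    not_subset.mp (hS F F.2)
  choose next hnextS hnext using hnext
  let G : ℕ → {F : Finset R // ↑F ⊆ S} :=
    Nat.rec ⟨∅, by simp⟩ fun _ F => ⟨insert (next F) F, by
      simpa [insert_subset_iff] using ⟨hnextS F, F.2⟩⟩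
  have hG {i k : ℕ} (hik : i < k) : next (G i) ∈ (G k).1 := by
    induction k with
    | zero => omega
    | succ k ih =>
      rcases Nat.lt_succ_iff_lt_or_eq.mp hik with h | rfl
      · exact Finset.mem_insert_of_mem (ih h)
      · exact Finset.mem_insert_self _ _
  refine ⟨fun k => next (G k), fun k hk => hnext (G k) (radical_mono (span_mono ?_) hk)⟩
  rintro _ ⟨i, hi, rfl⟩
  exact hG hi

def seqFiltration (t : ℕ → R) (Q : ℕ → Ideal R) : ℕ →o Ideal R where
  toFun k := Q k * span {t k} ⊔ span (t '' Iio k)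
  monotone' := monotone_nat_of_le_succ fun k => sup_le
    (mul_le_right.trans (le_sup_of_le_right (span_mono
      (singleton_subset_iff.mpr ⟨k, k.lt_succ_self, rfl⟩))))
    (le_sup_of_le_right (span_mono (image_mono (Iio_subset_Iio k.le_succ))))

theorem seqFiltration_apply (t : ℕ → R) (Q : ℕ → Ideal R) (k : ℕ) :
    seqFiltration t Q k = Q k * span {t k} ⊔ span (t '' Iio k) :=
  rfl

theorem mem_seqFiltration_succ (t : ℕ → R) (Q : ℕ → Ideal R) (k : ℕ) :
    t k ∈ seqFiltration t Q (k + 1) :=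
  mem_sup_right (subset_span ⟨k, k.lt_succ_self, rfl⟩)

theorem colon_seqFiltration {t : ℕ → R} {Q : ℕ → Ideal R} {k : ℕ} (hQ : (Q k).IsPrime)
    (htQ : t k ∉ Q k) (hQt : t '' Iio k ⊆ Q k) :
    (seqFiltration t Q k).colon (span {t k} : Ideal R) = Q k := by
  rw [seqFiltration_apply]
  refine le_antisymm (fun r hr => ?_) (fun r hr => ?_)
  · have hle : Q k * span {t k} ⊔ span (t '' Iio k) ≤ Q k :=
      sup_le mul_le_left (span_le.mpr hQt)
    exact (hQ.mem_or_mem (hle (mem_colon_span_singleton.mp hr))).resolve_right htQ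
  · exact mem_colon_span_singleton.mpr (mem_sup_left (mul_mem_mul hr (mem_span_singleton_self _)))

section Saturation

variable (I p : Ideal R) [p.IsPrime]

def saturationAtPrime : Ideal R :=
  (I.map (algebraMap R (Localization.AtPrime p))).comap (algebraMap R (Localization.AtPrime p))

variable {I p}

theorem mem_saturationAtPrime {r : R} : r ∈ I.saturationAtPrime p ↔ ∃ s ∉ p, s * r ∈ I :=
  IsLocalization.algebraMap_mem_map_algebraMap_iff p.primeCompl _ I r

theorem radical_saturationAtPrime (hp : p ∈ I.minimalPrimes) :
    (I.saturationAtPrime p).radical = p := by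
  rw [saturationAtPrime, ← comap_radical,
    IsLocalization.AtPrime.radical_map_of_mem_minimalPrimes _ p I hp,
    IsLocalization.AtPrime.map_eq_maximalIdeal]
  exact IsLocalization.AtPrime.under_maximalIdeal _ p

theorem exists_notMem_span_le_colon_of_subset_saturationAtPrime {F : Finset R}
    (hF : ↑F ⊆ (I.saturationAtPrime p : Set R)) :
    ∃ s ∉ p, span ↑F ≤ I.colon (span {s} : Ideal R) := by
  classical
  induction F using Finset.induction_on with
  | empty => exact ⟨1, (ne_top_iff_one p).mp ‹p.IsPrime›.ne_top, by simp⟩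
  | insert a F _ ih =>
    rw [Finset.coe_insert, insert_subset_iff] at hF
    obtain ⟨s, hs, hFs⟩ := ih hF.2
    obtain ⟨m, hm, hma⟩ := mem_saturationAtPrime.mp hF.1
    refine ⟨m * s, fun h => (‹p.IsPrime›.mem_or_mem h).elim hm hs, ?_⟩
    rw [Finset.coe_insert, span_insert, sup_le_iff, span_singleton_le_iff_mem,
      mem_colon_span_singleton]
    refine ⟨by rw [← mul_assoc, mul_comm a]; exact I.mul_mem_right s hma, fun r hr => ?_⟩
    have hrs := mem_colon_span_singleton.mp (hFs hr)
    exact mem_colon_span_singleton.mpr (by rw [mul_left_comm]; exact I.mul_mem_left m hrs)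

theorem colon_le_of_notMem {s : R} (hI : I ≤ p) (hs : s ∉ p) :
    I.colon (span {s} : Ideal R) ≤ p :=
  fun r hr => (‹p.IsPrime›.mem_or_mem (hI (mem_colon_span_singleton.mp hr))).resolve_right hs

theorem exists_eq_radical_colon_of_saturationAtPrime_le_radical (hp : p ∈ I.minimalPrimes)
    {F : Finset R} (hF : ↑F ⊆ (I.saturationAtPrime p : Set R))
    (hsat : I.saturationAtPrime p ≤ (span (F : Set R)).radical) :
    ∃ s, p = (I.colon (span {s} : Ideal R)).radical := by
  obtain ⟨s, hs, hFs⟩ := exists_notMem_span_le_colon_of_subset_saturationAtPrime hF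
  refine ⟨s, le_antisymm ?_ (‹p.IsPrime›.radical_le_iff.mpr (colon_le_of_notMem hp.le hs))⟩
  calc p = (I.saturationAtPrime p).radical := (radical_saturationAtPrime hp).symm
    _ ≤ (span (F : Set R)).radical := radical_le_radical_iff.mpr hsat
    _ ≤ (I.colon (span {s} : Ideal R)).radical := radical_mono hFs

end Saturation

end Ideal

open Ideal Set in
theorem infinite_associatedPrimes_coeffIdeal_seqFiltration {R : Type*} [CommRing R]
    {t : ℕ → R} {Q : ℕ → Ideal R} (hQ : ∀ k, (Q k).IsPrime) (htQ : ∀ k, t k ∉ Q k)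
    (hQt : ∀ k, t '' Iio k ⊆ Q k) :
    (associatedPrimes R[X] (R[X] ⧸ coeffIdeal (seqFiltration t Q))).Infinite := by
  have hinj : Function.Injective Q := by
    intro i j hij
    by_contra hne
    rcases Ne.lt_or_gt hne with h | h
    · exact htQ i (hij ▸ hQt j ⟨i, h, rfl⟩)
    · exact htQ j (hij ▸ hQt i ⟨j, h, rfl⟩)
  refine infinite_of_injective_forall_mem
    ((comap_injective_of_surjective _ constantCoeff_surjective).comp hinj) fun k => ?_
  have hcolon := colon_seqFiltration (hQ k) (htQ k) (hQt k)
  rw [Function.comp_apply, ← hcolon]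
  exact comap_constantCoeff_mem_associatedPrimes (mem_seqFiltration_succ t Q k) (hcolon ▸ hQ k)

open Ideal Set in
theorem not_isWeaklyLaskerian_polynomial_of_forall_notMem_radical {R : Type*} [CommRing R]
    {t : ℕ → R} (ht : ∀ k, t k ∉ (span (t '' Iio k)).radical) :
    ¬ IsWeaklyLaskerian R[X] R[X] := by
  choose Q hQ hQt htQ using fun k => exists_isPrime_le_notMem_of_notMem_radical (ht k)
  exact fun hRX => infinite_associatedPrimes_coeffIdeal_seqFiltration hQ htQ
    (fun k => subset_span.trans (hQt k)) (hRX _)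

theorem minimalPrimes_subset_zariskiSamuel_of_weaklyLaskerian_polynomial_general {R : Type*}
    [CommRing R]
    (hRX : IsWeaklyLaskerian (Polynomial R) (Polynomial R))
    (I : Ideal R) (p : Ideal R) (hp : p ∈ I.minimalPrimes) :
    ∃ x : R, p = (Submodule.colon I (Ideal.span {x})).radical := by
  have := hp.isPrime
  by_contra! hZS
  obtain ⟨t, ht⟩ := Ideal.exists_seq_notMem_radical_span (S := (I.saturationAtPrime p : Set R))
    fun F hF hsat =>
      (Ideal.exists_eq_radical_colon_of_saturationAtPrime_le_radical hp hF hsat).elim hZS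
  exact not_isWeaklyLaskerian_polynomial_of_forall_notMem_radical ht hRX

/-- If `R` is a weakly Laskerian commutative ring such that `R[X]` is weakly Laskerian,
and `I` is a proper ideal of `R`, then every prime minimal over `I` is a Zariski–Samuel
associated prime of `I`, i.e. it equals the radical of `(I : x)` for some `x ∈ R`. -/
theorem minimalPrimes_subset_zariskiSamuel_of_weaklyLaskerian_polynomial {R : Type*}
    [CommRing R] (hR : IsWeaklyLaskerian R R)
    (hRX : IsWeaklyLaskerian (Polynomial R) (Polynomial R))
    (I : Ideal R) (hI : I ≠ ⊤) (p : Ideal R) (hp : p ∈ I.minimalPrimes) :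
    ∃ x : R, p = (Submodule.colon I (Ideal.span {x})).radical :=
  minimalPrimes_subset_zariskiSamuel_of_weaklyLaskerian_polynomial_general hRX I p hp
end

section
/- Let R be a commutative ring and M an R-module. The trivial ring extension (idealization) R ⋉ M is a weakly Laskerian ring if and only if R is a weakly Laskerian ring and M is a weakly Laskerian R-module. -/
/-!
Associated primes are prime, and the primes of `R ⋉ M` are exactly the `p ⋉ M`: each contains
the square-zero ideal `0 ⋉ M`. So contraction along `R → R ⋉ M` and along `R ⋉ M → R` is
injective on prime ideals. For a ring map `A → B` with this property and a `B`-module `N`,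
contraction sends `Ass_B(N/K)` into `Ass_A(N/K)`, so `N` is weakly Laskerian over `B` as soon
as it is over `A`. Apply this to `R → R ⋉ M`, where `R ⋉ M` is weakly Laskerian over `R` as an
extension of `R` by `M`, and to `R ⋉ M → R`, where `R` is a quotient and `M ≅ 0 ⋉ M` an ideal
of `R ⋉ M`.
-/

namespace IsWeaklyLaskerian

section Module

variable {R X Y Z : Type*} [CommRing R] [AddCommGroup X] [Module R X] [AddCommGroup Y]
  [Module R Y] [AddCommGroup Z] [Module R Z]

theorem finite_associatedPrimes_of_surjective (h : IsWeaklyLaskerian R X) {f : X →ₗ[R] Y}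
    (hf : Function.Surjective f) : (associatedPrimes R Y).Finite :=
  LinearEquiv.AssociatedPrimes.eq (f.quotKerEquivOfSurjective hf) ▸ h (LinearMap.ker f)

theorem of_surjective (h : IsWeaklyLaskerian R X) {f : X →ₗ[R] Y}
    (hf : Function.Surjective f) : IsWeaklyLaskerian R Y := fun K =>
  h.finite_associatedPrimes_of_surjective (f := K.mkQ ∘ₗ f) (K.mkQ_surjective.comp hf)

theorem of_injective (h : IsWeaklyLaskerian R Y) {f : X →ₗ[R] Y}
    (hf : Function.Injective f) : IsWeaklyLaskerian R X := by
  intro K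
  have hK : K = (K.map f).comap f := (Submodule.comap_map_eq_of_injective hf K).symm
  refine (h (K.map f)).subset (associatedPrimes.subset_of_injective
    (f := K.mapQ (K.map f) f hK.le) ?_)
  rw [← LinearMap.ker_eq_bot, Submodule.ker_mapQ, ← hK, Submodule.mkQ_map_self]

theorem of_submodule_of_quotient {S : Submodule R Y} (hS : IsWeaklyLaskerian R S)
    (hQ : IsWeaklyLaskerian R (Y ⧸ S)) : IsWeaklyLaskerian R Y := by
  intro K
  have hImage : (associatedPrimes R (S.map K.mkQ)).Finite :=
    hS.finite_associatedPrimes_of_surjective (K.mkQ.submoduleMap_surjective S)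
  have hCokernel : (associatedPrimes R ((Y ⧸ K) ⧸ S.map K.mkQ)).Finite := by
    rw [LinearEquiv.AssociatedPrimes.eq (K.quotientQuotientEquivQuotientSup S), sup_comm,
      ← LinearEquiv.AssociatedPrimes.eq (S.quotientQuotientEquivQuotientSup K)]
    exact hQ _
  exact (hImage.union hCokernel).subset (associatedPrimes.subset_union_of_exact
    (Submodule.injective_subtype _) (LinearMap.exact_subtype_mkQ _))

theorem of_exact (hX : IsWeaklyLaskerian R X) (hZ : IsWeaklyLaskerian R Z) {f : X →ₗ[R] Y}
    {g : Y →ₗ[R] Z} (hf : Function.Injective f) (hg : Function.Surjective g)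
    (hfg : Function.Exact f g) : IsWeaklyLaskerian R Y :=
  of_submodule_of_quotient (S := LinearMap.range f)
    (hX.of_surjective (LinearEquiv.ofInjective f hf).surjective)
    (hZ.of_surjective (hfg.linearEquivOfSurjective hg).symm.surjective)

end Module

end IsWeaklyLaskerian

section ChangeOfRings

variable {A B N : Type*} [CommRing A] [CommRing B] [Algebra A B] [AddCommGroup N] [Module A N]
  [Module B N] [IsScalarTower A B N]

theorem IsAssociatedPrime.comap_algebraMap {P : Ideal B} (h : IsAssociatedPrime P N) :
    IsAssociatedPrime (P.comap (algebraMap A B)) N := by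
  obtain ⟨hP, x, rfl⟩ := h
  refine ⟨hP.comap _, x, ?_⟩
  rw [Ideal.comap_radical]
  congr 1
  ext a
  simp only [Ideal.mem_comap, Submodule.mem_colon_singleton, Submodule.mem_bot, algebraMap_smul]

theorem IsWeaklyLaskerian.of_isScalarTower
    (hinj : Set.InjOn (Ideal.comap (algebraMap A B)) {P | P.IsPrime})
    (h : IsWeaklyLaskerian A N) : IsWeaklyLaskerian B N := by
  intro K
  have hA : (associatedPrimes A (N ⧸ K)).Finite :=
    LinearEquiv.AssociatedPrimes.eq (Submodule.Quotient.restrictScalarsEquiv A K) ▸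
      h (K.restrictScalars A)
  exact Set.Finite.of_finite_image (hA.subset (Set.image_subset_iff.2 fun P hP =>
    IsAssociatedPrime.comap_algebraMap hP)) (hinj.mono fun P hP => hP.isPrime)

theorem IsWeaklyLaskerian.of_isScalarTower_of_surjective
    (hsurj : Function.Surjective (algebraMap A B)) (h : IsWeaklyLaskerian A N) :
    IsWeaklyLaskerian B N :=
  h.of_isScalarTower (Ideal.comap_injective_of_surjective _ hsurj).injOn

end ChangeOfRings

namespace TrivSqZeroExt

theorem mul_inr {R M : Type*} [Semiring R] [AddCommMonoid M] [Module R M] [Module Rᵐᵒᵖ M]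
    (x : TrivSqZeroExt R M) (m : M) : x * inr m = inr (x.fst • m) := by
  ext <;> simp

variable {R M : Type*} [CommRing R] [AddCommGroup M] [Module R M] [Module Rᵐᵒᵖ M]
  [IsCentralScalar R M]

theorem comap_fstHom_comap_algebraMap (P : Ideal (TrivSqZeroExt R M)) [P.IsPrime] :
    (P.comap (algebraMap R (TrivSqZeroExt R M))).comap (fstHom R R M) = P := by
  have hker : kerIdeal R M ≤ P :=
    (Ideal.IsPrime.pow_le_iff two_ne_zero).1 (kerIdeal_sq R M ▸ bot_le)
  ext x
  rw [Ideal.mem_comap, Ideal.mem_comap, algebraMap_eq_inl, fstHom_apply]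
  conv_rhs => rw [← inl_fst_add_inr_snd_eq x]
  exact (P.add_mem_iff_left (hker (fst_inr R x.snd))).symm

theorem injOn_comap_algebraMap :
    Set.InjOn (Ideal.comap (algebraMap R (TrivSqZeroExt R M))) {P | P.IsPrime} := by
  intro P (hP : P.IsPrime) Q (hQ : Q.IsPrime) h
  rw [← comap_fstHom_comap_algebraMap P, h, comap_fstHom_comap_algebraMap]

theorem exact_inrHom_fstHom : Function.Exact (inrHom R M) (fstHom R R M) := by
  intro x
  refine ⟨fun hx => ⟨x.snd, ext (fst_inr R _ ▸ hx.symm) rfl⟩, ?_⟩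
  rintro ⟨m, rfl⟩
  exact fst_inr R m

theorem isWeaklyLaskerian (hR : IsWeaklyLaskerian R R) (hM : IsWeaklyLaskerian R M) :
    IsWeaklyLaskerian R (TrivSqZeroExt R M) :=
  hM.of_exact hR (g := (fstHom R R M).toLinearMap) inr_injective
    (fun r => ⟨inl r, fst_inl M r⟩) exact_inrHom_fstHom

section Base

attribute [local instance] algebraBase

abbrev moduleBase : Module (TrivSqZeroExt R M) M :=
  Module.compHom M (fstHom R R M).toRingHom

attribute [local instance] moduleBase

instance : IsScalarTower (TrivSqZeroExt R M) R M :=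
  ⟨fun x r m => mul_smul x.fst r m⟩

def inrLinearMap : M →ₗ[TrivSqZeroExt R M] TrivSqZeroExt R M where
  toFun := inr
  map_add' := inr_add R
  map_smul' x m := (mul_inr x m).symm

theorem surjective_algebraMap_base : Function.Surjective (algebraMap (TrivSqZeroExt R M) R) :=
  fun r => ⟨inl r, fst_inl M r⟩

theorem isWeaklyLaskerian_base_of_isWeaklyLaskerian
    (h : IsWeaklyLaskerian (TrivSqZeroExt R M) (TrivSqZeroExt R M)) :
    IsWeaklyLaskerian R R :=
  (h.of_surjective (f := Algebra.linearMap (TrivSqZeroExt R M) R) surjective_algebraMap_base)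
    |>.of_isScalarTower_of_surjective surjective_algebraMap_base

theorem isWeaklyLaskerian_module_of_isWeaklyLaskerian
    (h : IsWeaklyLaskerian (TrivSqZeroExt R M) (TrivSqZeroExt R M)) :
    IsWeaklyLaskerian R M :=
  (h.of_injective (f := inrLinearMap) inr_injective)
    |>.of_isScalarTower_of_surjective surjective_algebraMap_base

end Base

end TrivSqZeroExt

/-- The trivial ring extension (idealization) `R ⋉ M` is a weakly Laskerian ring if and
only if `R` is a weakly Laskerian ring and `M` is a weakly Laskerian `R`-module. -/
theorem trivSqZeroExt_isWeaklyLaskerian_iff {R M : Type*} [CommRing R] [AddCommGroup M]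
    [Module R M] [Module Rᵐᵒᵖ M] [IsCentralScalar R M] :
    IsWeaklyLaskerian (TrivSqZeroExt R M) (TrivSqZeroExt R M) ↔
      IsWeaklyLaskerian R R ∧ IsWeaklyLaskerian R M := by
  constructor
  · intro h
    exact ⟨TrivSqZeroExt.isWeaklyLaskerian_base_of_isWeaklyLaskerian h,
      TrivSqZeroExt.isWeaklyLaskerian_module_of_isWeaklyLaskerian h⟩
  · rintro ⟨hR, hM⟩
    exact (TrivSqZeroExt.isWeaklyLaskerian hR hM).of_isScalarTower
      TrivSqZeroExt.injOn_comap_algebraMap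
end
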